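/- arXiv:1306.6140 — 2 statements merged into one kernel-verified Lean document; each statement's English description precedes it below -/
import Mathlib

section
/- Let d ≥ 2 and m ≥ 1 be integers with (d−1) dividing (m+1), and set a = (m+1)/(d−1). Let p be a prime dividing d and t = ν_p(d). Let n ≥ 1 be an integer with m ≤ d^{n+1} − 3. If p divides m and m ≠ d − 2, then either B(d,m,n) = 0 or ν_p(B(d,m,n)) > −(ν_p(a!) + t·a). -/
/-- Generalized binomial coefficient `C_j(x) = x(x-1)⋯(x-j+1)/j!`, with `C_0(x) = 1`. -/
noncomputable def genBinom (x : ℚ) (j : ℕ) : ℚ :=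
  (∏ i ∈ Finset.range j, (x - (i : ℚ))) / (Nat.factorial j : ℚ)

/-- The Ewing–Schober combinatorial formula `B(d,m,n)`: the sum is over all tuples
`(j_1,…,j_n)` of nonnegative integers (here `j : Fin n → ℕ`, 0-indexed, so `j k`
corresponds to `j_{k+1}`) satisfying `Σ_{k=1}^n (d^{n-k+1} - 1) j_k = m + 1`, of
`Π_{k=1}^n C_{j_k}(m/d^{n-k+1} - Σ_{l=1}^{k-1} d^{k-l} j_l)`, multiplied by `-(1/m)`. -/
noncomputable def multibrotB (d m n : ℕ) : ℚ :=
  -(1 / (m : ℚ)) * ∑ᶠ j : Fin n → ℕ,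
    if (∑ k : Fin n, (d ^ (n - k.val) - 1) * j k) = m + 1 then
      ∏ k : Fin n,
        genBinom ((m : ℚ) / (d : ℚ) ^ (n - k.val)
          - ∑ l ∈ Finset.univ.filter (fun l : Fin n => l < k),
              (d : ℚ) ^ (k.val - l.val) * ((j l : ℕ) : ℚ)) (j k)
    else 0

/-!
Write `B(d,m,n) = -(1/m) Σ_j T_j`, where `T_j = Π_k C_{j_k}(x_k)`, `x_k = m/d^{e_k} - s_k` with
`e_k = n - k` and `s_k ∈ ℤ`. Put `v = ν_p(m)`; it suffices that every nonzero `T_j` has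
`ν_p(T_j) > v - ν_p(a!) - t a`. The constraint on `j` reads `Σ_k (d^{e_k} - 1) j_k = a (d - 1)`,
so `Σ_k j_k e_k ≤ a`, and `e_k < a` whenever `j_k ≠ 0` (this is where `a ≥ 2`, i.e. `m ≠ d - 2`,
enters).

Subtracting an integer does not change `min(ν_p(x), 0)`. If `ν_p(x) < 0` then
`ν_p(C_j(x)) = j ν_p(x) - ν_p(j!)`, and if `ν_p(x) ≥ 0` then `C_j(x)` is `p`-integral. Hence
`ν_p(T_j) ≥ Σ_k j_k min(v - e_k t, 0) - ν_p(a!)`, which is enough when `v < t a`: the factors with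
`v < e_k t` have total weight `0`, `1` (and then `e_k < a`) or at least `2` (and then `v ≥ 1`
pays for it). When `v ≥ t a` every factor is `p`-integral, and the first factor with `j_k ≠ 0`
has `s_k = 0`, so `C_{j_k}(x_k) = (x_k / j_k) C_{j_k - 1}(x_k - 1)` has valuation at least
`v - e_k t - ν_p(j_k) > v - t a - ν_p(a!)`.
-/

open Finset Nat

theorem pow_sub_one_add_sub_one_le (d e : ℕ) : d ^ e - 1 + (d - 1) ≤ d ^ (e + 1) - 1 := by
  rcases Nat.eq_zero_or_pos d with rfl | hd
  · rcases e with _ | e <;> simp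
  have h1 : 1 ≤ d ^ e := Nat.one_le_pow _ _ hd
  have h2 : d ^ e + d ≤ d ^ e * d + 1 := by nlinarith
  rw [pow_succ]
  omega

theorem mul_sub_one_le_pow_sub_one (d e : ℕ) : e * (d - 1) ≤ d ^ e - 1 := by
  induction e with
  | zero => simp
  | succ e ih =>
    rw [Nat.add_one_mul]
    exact (Nat.add_le_add_right ih _).trans (pow_sub_one_add_sub_one_le d e)

theorem add_one_mul_sub_one_le_pow_sub_one (d : ℕ) {e : ℕ} (he : 2 ≤ e) :
    (e + 1) * (d - 1) ≤ d ^ e - 1 := by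
  induction e, he using Nat.le_induction with
  | base =>
    rcases d with _ | c
    · simp
    have h1 : (c + 1) ^ 2 = c ^ 2 + 2 * c + 1 := by ring
    have h2 : c ≤ c ^ 2 := Nat.le_self_pow two_ne_zero c
    simp only [add_tsub_cancel_right]
    omega
  | succ e _ ih =>
    rw [Nat.add_one_mul]
    exact (Nat.add_le_add_right ih _).trans (pow_sub_one_add_sub_one_le d e)

theorem sum_mul_le_of_sum_pow_sub_one_mul_eq {ι : Type*} {s : Finset ι} {j e : ι → ℕ} {d a : ℕ}
    (hd : 2 ≤ d) (h : ∑ i ∈ s, (d ^ e i - 1) * j i = a * (d - 1)) :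
    ∑ i ∈ s, j i * e i ≤ a := by
  refine Nat.le_of_mul_le_mul_right ?_ (show 0 < d - 1 by omega)
  rw [← h, sum_mul]
  exact sum_le_sum fun i _ => by
    rw [mul_assoc, mul_comm]
    exact Nat.mul_le_mul_right _ (mul_sub_one_le_pow_sub_one d (e i))

theorem sum_le_of_sum_pow_sub_one_mul_eq {ι : Type*} {s : Finset ι} {j e : ι → ℕ} {d a : ℕ}
    (hd : 2 ≤ d) (he : ∀ i ∈ s, 1 ≤ e i) (h : ∑ i ∈ s, (d ^ e i - 1) * j i = a * (d - 1)) :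
    ∑ i ∈ s, j i ≤ a :=
  (sum_le_sum fun i hi => Nat.le_mul_of_pos_right (j i) (he i hi)).trans
    (sum_mul_le_of_sum_pow_sub_one_mul_eq hd h)

theorem lt_of_sum_pow_sub_one_mul_eq {ι : Type*} {s : Finset ι} {j e : ι → ℕ} {d a : ℕ}
    (hd : 2 ≤ d) (ha : 2 ≤ a) (h : ∑ i ∈ s, (d ^ e i - 1) * j i = a * (d - 1))
    {i : ι} (hi : i ∈ s) (hj : j i ≠ 0) : e i < a := by
  rcases Nat.lt_or_ge (e i) 2 with he | he
  · omega
  refine Nat.lt_of_add_one_le (Nat.le_of_mul_le_mul_right ?_ (show 0 < d - 1 by omega))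
  calc (e i + 1) * (d - 1) ≤ (d ^ e i - 1) * j i :=
        (add_one_mul_sub_one_le_pow_sub_one d he).trans (Nat.le_mul_of_pos_right _ (by omega))
    _ ≤ a * (d - 1) :=
        h ▸ single_le_sum (f := fun i => (d ^ e i - 1) * j i) (fun i _ => Nat.zero_le _) hi

section Valuation

variable {p : ℕ} [hp : Fact p.Prime]

namespace padicValRat

theorem prod {ι : Type*} {s : Finset ι} {f : ι → ℚ} (hf : ∀ i ∈ s, f i ≠ 0) :
    padicValRat p (∏ i ∈ s, f i) = ∑ i ∈ s, padicValRat p (f i) := by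
  classical
  induction s using Finset.induction_on with
  | empty => simp
  | insert a s ha ih =>
    rw [prod_insert ha, sum_insert ha, padicValRat.mul (hf a (mem_insert_self a s))
      (prod_ne_zero_iff.2 fun i hi => hf i (mem_insert_of_mem hi)),
      ih fun i hi => hf i (mem_insert_of_mem hi)]

theorem sub_intCast_of_neg {q : ℚ} (hq : padicValRat p q < 0) (s : ℤ) :
    padicValRat p (q - s) = padicValRat p q := by
  rcases eq_or_ne s 0 with rfl | hs
  · simp
  have hq0 : q ≠ 0 := by rintro rfl; simp at hq
  have hqs : q + -(s : ℚ) ≠ 0 := by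
    intro h
    rw [show q = s by linarith, padicValRat.of_int] at hq
    omega
  rw [sub_eq_add_neg, add_eq_of_lt hqs hq0 (by simpa using hs)]
  rw [padicValRat.neg, padicValRat.of_int]
  omega

theorem nonneg_sub_intCast {q : ℚ} (hq : 0 ≤ padicValRat p q) (s : ℤ) :
    0 ≤ padicValRat p (q - s) := by
  rcases eq_or_ne (q - s) 0 with h | h
  · simp [h]
  rw [sub_eq_add_neg] at h ⊢
  refine le_trans (le_min hq ?_) (min_le_padicValRat_add h)
  rw [padicValRat.neg, padicValRat.of_int]
  omega

theorem min_sub_intCast_zero (q : ℚ) (s : ℤ) :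
    min (padicValRat p (q - s)) 0 = min (padicValRat p q) 0 := by
  rcases lt_or_ge (padicValRat p q) 0 with hq | hq
  · rw [sub_intCast_of_neg hq]
  · rw [min_eq_right hq, min_eq_right (nonneg_sub_intCast hq s)]

theorem eq_zero_or_lt_add {c : ℤ} {x y : ℚ} (hx : x = 0 ∨ c < padicValRat p x)
    (hy : y = 0 ∨ c < padicValRat p y) : x + y = 0 ∨ c < padicValRat p (x + y) := by
  rcases hx with rfl | hx
  · simpa using hy
  rcases hy with rfl | hy
  · simpa using Or.inr hx
  rcases eq_or_ne (x + y) 0 with h | h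
  · exact Or.inl h
  · exact Or.inr ((lt_min hx hy).trans_le (min_le_padicValRat_add h))

theorem eq_zero_or_lt_finsum {α : Type*} {c : ℤ} {f : α → ℚ}
    (hf : ∀ a, f a = 0 ∨ c < padicValRat p (f a)) :
    ∑ᶠ a, f a = 0 ∨ c < padicValRat p (∑ᶠ a, f a) := by
  by_cases h : (Function.support f).Finite
  · rw [finsum_eq_sum f h]
    exact sum_induction f (fun x => x = 0 ∨ c < padicValRat p x) (fun _ _ => eq_zero_or_lt_add)
      (Or.inl rfl) fun a _ => hf a
  · exact Or.inl (finsum_of_infinite_support h)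

end padicValRat

theorem padicValNat_le_of_dvd {a b : ℕ} (hb : b ≠ 0) (h : a ∣ b) :
    padicValNat p a ≤ padicValNat p b := by
  rcases eq_or_ne a 0 with rfl | ha
  · simp
  rw [← factorization_def _ hp.out, ← factorization_def _ hp.out]
  exact (factorization_le_iff_dvd ha hb).2 h p

theorem sum_padicValNat_factorial_le {ι : Type*} (s : Finset ι) (f : ι → ℕ) {a : ℕ}
    (h : ∑ i ∈ s, f i ≤ a) : ∑ i ∈ s, padicValNat p (f i)! ≤ padicValNat p a ! := by
  have hdvd : ∏ i ∈ s, (f i)! ∣ a ! :=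
    (prod_factorial_dvd_factorial_sum s f).trans (factorial_dvd_factorial h)
  simp only [← factorization_def _ hp.out]
  rw [← Finsupp.finsetSum_apply, ← factorization_prod fun i _ => factorial_ne_zero _]
  exact (factorization_le_iff_dvd (prod_ne_zero_iff.2 fun i _ => factorial_ne_zero _)
    (factorial_ne_zero _)).2 hdvd p

theorem genBinom_succ (x : ℚ) (j : ℕ) :
    genBinom x (j + 1) = x / (j + 1) * genBinom (x - 1) j := by
  rw [genBinom, genBinom, prod_range_succ', factorial_succ]
  simp only [Nat.cast_add, Nat.cast_one, Nat.cast_mul, Nat.cast_zero, sub_zero]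
  rw [prod_congr rfl fun (i : ℕ) _ => show x - ((i : ℚ) + 1) = x - 1 - i by ring]
  have : ((j ! : ℕ) : ℚ) ≠ 0 := by positivity
  field_simp

theorem padicValRat_genBinom_of_neg {x : ℚ} (hx : padicValRat p x < 0) (j : ℕ) :
    padicValRat p (genBinom x j) = j * padicValRat p x - padicValNat p j ! := by
  have hval : ∀ i : ℕ, padicValRat p (x - i) = padicValRat p x := fun i => by
    exact_mod_cast padicValRat.sub_intCast_of_neg hx i
  have hne : ∀ i ∈ range j, x - i ≠ 0 := fun i _ h => by
    have := hval i
    rw [h, padicValRat.zero] at this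
    omega
  rw [genBinom, padicValRat.div (prod_ne_zero_iff.2 hne) (by positivity), padicValRat.prod hne,
    sum_congr rfl fun i _ => hval i, sum_const, card_range, nsmul_eq_mul, padicValRat.of_nat]

theorem padicValRat_genBinom_nonneg {x : ℚ} (hx : 0 ≤ padicValRat p x) (j : ℕ) :
    0 ≤ padicValRat p (genBinom x j) := by
  have hxint : ‖(x : ℚ_[p])‖ ≤ 1 := by
    rwa [Padic.norm_le_one_iff_val_nonneg, Padic.valuation_ratCast]
  let y : ℤ_[p] := ⟨x, hxint⟩
  have hprod : ‖∏ i ∈ range j, (y - i)‖ ≤ ‖(j ! : ℤ_[p])‖ := by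
    rw [← descPochhammer_eval_eq_prod_range, descPochhammer_eval_eq_ascPochhammer]
    exact PadicInt.norm_ascPochhammer_le _ _
  rw [← Padic.valuation_ratCast, ← Padic.norm_le_one_iff_val_nonneg, genBinom]
  push_cast
  rw [norm_div, div_le_one (by simpa using factorial_ne_zero j)]
  have hcoe : ((∏ i ∈ range j, (y - i) : ℤ_[p]) : ℚ_[p]) = ∏ i ∈ range j, ((x : ℚ_[p]) - i) :=
    map_prod (PadicInt.Coe.ringHom (p := p)) _ _
  rwa [PadicInt.norm_def, hcoe, PadicInt.norm_def, PadicInt.coe_natCast] at hprod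

theorem sub_padicValNat_le_padicValRat_genBinom_succ {x : ℚ} (hx : 0 ≤ padicValRat p x) {j : ℕ}
    (hne : genBinom x (j + 1) ≠ 0) :
    padicValRat p x - padicValNat p (j + 1) ≤ padicValRat p (genBinom x (j + 1)) := by
  rw [genBinom_succ] at hne ⊢
  obtain ⟨hxj, hrest⟩ := mul_ne_zero_iff.1 hne
  have hx0 : x ≠ 0 := (div_ne_zero_iff.1 hxj).1
  have hrest_nonneg : 0 ≤ padicValRat p (genBinom (x - 1) j) :=
    padicValRat_genBinom_nonneg (by exact_mod_cast padicValRat.nonneg_sub_intCast hx 1) j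
  rw [padicValRat.mul hxj hrest, padicValRat.div hx0 (by positivity),
    ← padicValRat.of_nat, Nat.cast_add, Nat.cast_one]
  linarith

theorem mul_min_zero_sub_le_padicValRat_genBinom (x : ℚ) (j : ℕ) :
    j * min (padicValRat p x) 0 - padicValNat p j ! ≤ padicValRat p (genBinom x j) := by
  rcases lt_or_ge (padicValRat p x) 0 with hx | hx
  · rw [min_eq_left hx.le, padicValRat_genBinom_of_neg hx]
  · rw [min_eq_right hx, mul_zero, zero_sub]
    exact (neg_nonpos.2 (Int.natCast_nonneg _)).trans (padicValRat_genBinom_nonneg hx j)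

end Valuation

theorem sub_mul_lt_sum_mul_min {ι : Type*} (s : Finset ι) (j e : ι → ℕ) {a : ℕ} {v t : ℤ}
    (hv : 0 < v) (ht : 0 < t) (hvt : v < t * a) (hsum : ∑ i ∈ s, j i * e i ≤ a)
    (he : ∀ i ∈ s, j i ≠ 0 → e i < a) :
    v - t * a < ∑ i ∈ s, (j i : ℤ) * min (v - e i * t) 0 := by
  -- `J` is the weight of the indices where the minimum is negative; `hA` settles `J ≥ 2`,
  -- `hB` settles `J ≤ 1`.
  let g : ι → ℤ := fun i => if v < e i * t then j i else 0
  let J := ∑ i ∈ s, g i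
  have hsumz : ∑ i ∈ s, (j i : ℤ) * e i ≤ a := by exact_mod_cast hsum
  have hA : J * v - t * a ≤ ∑ i ∈ s, (j i : ℤ) * min (v - e i * t) 0 := by
    calc J * v - t * a ≤ ∑ i ∈ s, (g i * v - j i * e i * t) := by
          rw [sum_sub_distrib, ← sum_mul, ← sum_mul]
          nlinarith
      _ ≤ _ := sum_le_sum fun i _ => by
          by_cases hc : v < e i * t
          · simp only [g, if_pos hc, min_eq_left (sub_neg.2 hc).le]
            linarith
          · simp only [g, if_neg hc, min_eq_right (sub_nonneg.2 (not_lt.1 hc))]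
            have : 0 ≤ (j i : ℤ) * e i * t := by positivity
            linarith
  have hB : J * (v - (a - 1) * t) ≤ ∑ i ∈ s, (j i : ℤ) * min (v - e i * t) 0 := by
    rw [sum_mul]
    refine sum_le_sum fun i hi => ?_
    by_cases hc : v < e i * t
    · simp only [g, if_pos hc, min_eq_left (sub_neg.2 hc).le]
      rcases eq_or_ne (j i) 0 with hj | hj
      · simp [hj]
      · have : (e i : ℤ) ≤ a - 1 := by have := he i hi hj; omega
        have : (j i : ℤ) * (e i * t) ≤ j i * ((a - 1) * t) := by gcongr
        linarith
    · simp [g, if_neg hc, min_eq_right (sub_nonneg.2 (not_lt.1 hc))]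
  have hJ : 0 ≤ J := sum_nonneg fun i _ => by positivity
  obtain hJ | hJ | hJ : J = 0 ∨ J = 1 ∨ 2 ≤ J := by omega
  · rw [hJ] at hB; linarith
  · rw [hJ] at hB; linarith
  · nlinarith

noncomputable def multibrotArg (d m n : ℕ) (j : Fin n → ℕ) (k : Fin n) : ℚ :=
  (m : ℚ) / (d : ℚ) ^ (n - k.val)
    - ∑ l ∈ univ.filter (fun l : Fin n => l < k), (d : ℚ) ^ (k.val - l.val) * ((j l : ℕ) : ℚ)

noncomputable def multibrotSummand (d m n : ℕ) (j : Fin n → ℕ) : ℚ :=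
  if (∑ k : Fin n, (d ^ (n - k.val) - 1) * j k) = m + 1 then
    ∏ k : Fin n, genBinom (multibrotArg d m n j k) (j k)
  else 0

theorem multibrotB_eq_finsum (d m n : ℕ) :
    multibrotB d m n = -(1 / (m : ℚ)) * ∑ᶠ j, multibrotSummand d m n j := rfl

section Summand

variable {p : ℕ} [Fact p.Prime] {d m n : ℕ}

theorem padicValRat_natCast_div_pow (hm : m ≠ 0) (hd : d ≠ 0) (e : ℕ) :
    padicValRat p ((m : ℚ) / (d : ℚ) ^ e) = padicValNat p m - e * padicValNat p d := by
  rw [padicValRat.div (by positivity) (by positivity), padicValRat.pow, padicValRat.of_nat,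
    padicValRat.of_nat]

theorem min_padicValRat_multibrotArg_zero (hm : m ≠ 0) (hd : d ≠ 0) (j : Fin n → ℕ) (k : Fin n) :
    min (padicValRat p (multibrotArg d m n j k)) 0
      = min ((padicValNat p m : ℤ) - (n - k.val : ℕ) * padicValNat p d) 0 := by
  have hs : multibrotArg d m n j k = (m : ℚ) / (d : ℚ) ^ (n - k.val)
      - ((∑ l ∈ univ.filter (fun l : Fin n => l < k), d ^ (k.val - l.val) * j l : ℕ) : ℤ) := by
    rw [multibrotArg]
    push_cast
    rfl
  rw [hs, padicValRat.min_sub_intCast_zero, padicValRat_natCast_div_pow hm hd]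

theorem multibrotArg_of_forall_lt_eq_zero (j : Fin n → ℕ) {k : Fin n} (h : ∀ l < k, j l = 0) :
    multibrotArg d m n j k = (m : ℚ) / (d : ℚ) ^ (n - k.val) := by
  rw [multibrotArg, sub_eq_self]
  exact sum_eq_zero fun l hl => by simp [h l (mem_filter.1 hl).2]

theorem padicValRat_multibrotArg_nonneg (hm : m ≠ 0) (hd : d ≠ 0) (j : Fin n → ℕ) {k : Fin n}
    (hk : ((n - k.val : ℕ) : ℤ) * padicValNat p d ≤ padicValNat p m) :
    0 ≤ padicValRat p (multibrotArg d m n j k) := by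
  have := min_padicValRat_multibrotArg_zero (p := p) hm hd j k
  rw [min_eq_right (sub_nonneg.2 hk)] at this
  exact min_eq_right_iff.1 this

variable {a : ℕ} {j : Fin n → ℕ}

theorem lt_sum_padicValRat_genBinom_of_lt (hd : 2 ≤ d) (hm : m ≠ 0) (ha : a * (d - 1) = m + 1)
    (ha2 : 2 ≤ a) (hpm : p ∣ m) (hpd : p ∣ d)
    (hj : ∑ k : Fin n, (d ^ (n - k.val) - 1) * j k = m + 1)
    (hvt : (padicValNat p m : ℤ) < padicValNat p d * a) :
    (padicValNat p m : ℤ) - padicValNat p a ! - padicValNat p d * a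
      < ∑ k, padicValRat p (genBinom (multibrotArg d m n j k) (j k)) := by
  have hj' := hj.trans ha.symm
  have hsum := sum_mul_le_of_sum_pow_sub_one_mul_eq hd hj'
  have hfact : (∑ k, padicValNat p (j k)! : ℤ) ≤ padicValNat p a ! := by
    exact_mod_cast sum_padicValNat_factorial_le univ j
      (sum_le_of_sum_pow_sub_one_mul_eq hd (fun k _ => by omega) hj')
  have harith := sub_mul_lt_sum_mul_min univ j (fun k : Fin n => n - k.val)
    (by exact_mod_cast one_le_padicValNat_of_dvd hm hpm)
    (by exact_mod_cast one_le_padicValNat_of_dvd (by omega) hpd) hvt hsum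
    (fun k hk hjk => lt_of_sum_pow_sub_one_mul_eq hd ha2 hj' hk hjk)
  calc (padicValNat p m : ℤ) - padicValNat p a ! - padicValNat p d * a
      < ∑ k, ((j k : ℤ) * min ((padicValNat p m : ℤ) - (n - k.val : ℕ) * padicValNat p d) 0
          - padicValNat p (j k)!) := by
        rw [sum_sub_distrib]
        linarith
    _ = ∑ k, ((j k : ℤ) * min (padicValRat p (multibrotArg d m n j k)) 0
          - padicValNat p (j k)!) := by
        simp only [min_padicValRat_multibrotArg_zero hm (by omega : d ≠ 0)]
    _ ≤ _ := sum_le_sum fun k _ => mul_min_zero_sub_le_padicValRat_genBinom _ _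

theorem lt_sum_padicValRat_genBinom_of_le (hd : 2 ≤ d) (hm : m ≠ 0) (ha : a * (d - 1) = m + 1)
    (ha2 : 2 ≤ a) (hpd : p ∣ d) (hj : ∑ k : Fin n, (d ^ (n - k.val) - 1) * j k = m + 1)
    (hne : ∀ k, genBinom (multibrotArg d m n j k) (j k) ≠ 0)
    (hvt : padicValNat p d * a ≤ (padicValNat p m : ℤ)) :
    (padicValNat p m : ℤ) - padicValNat p a ! - padicValNat p d * a
      < ∑ k, padicValRat p (genBinom (multibrotArg d m n j k) (j k)) := by
  have hj' := hj.trans ha.symm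
  have ht : (1 : ℤ) ≤ padicValNat p d := by
    exact_mod_cast one_le_padicValNat_of_dvd (by omega) hpd
  have hea : ∀ k, j k ≠ 0 → ((n - k.val : ℕ) : ℤ) + 1 ≤ a := fun k hjk => by
    have := lt_of_sum_pow_sub_one_mul_eq hd ha2 hj' (mem_univ k) hjk
    omega
  have hval : ∀ k, j k ≠ 0 → 0 ≤ padicValRat p (multibrotArg d m n j k) := fun k hjk =>
    padicValRat_multibrotArg_nonneg hm (by omega) j (by nlinarith [hea k hjk])
  have hnonneg : ∀ k, 0 ≤ padicValRat p (genBinom (multibrotArg d m n j k) (j k)) := fun k => by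
    rcases eq_or_ne (j k) 0 with hjk | hjk
    · simp [hjk, genBinom]
    · exact padicValRat_genBinom_nonneg (hval k hjk) _
  obtain ⟨k, hjk, hmin⟩ : ∃ k, j k ≠ 0 ∧ ∀ l < k, j l = 0 := by
    have hex : ∃ k, j k ≠ 0 := by
      by_contra! h
      simp [h] at hj
    obtain ⟨k, hjk, hmin⟩ := wellFounded_lt.has_min {k | j k ≠ 0} hex
    exact ⟨k, hjk, fun l hl => by_contra fun h => hmin l h hl⟩
  have hjka : j k ≤ a := (single_le_sum (fun _ _ => Nat.zero_le _) (mem_univ k)).trans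
    (sum_le_of_sum_pow_sub_one_mul_eq hd (fun k _ => by omega) hj')
  have hνj : (padicValNat p (j k) : ℤ) ≤ padicValNat p a ! := by
    exact_mod_cast
      padicValNat_le_of_dvd (factorial_ne_zero a) (Nat.dvd_factorial (by omega) hjka)
  have hfirst : padicValRat p (multibrotArg d m n j k) - padicValNat p (j k)
      ≤ padicValRat p (genBinom (multibrotArg d m n j k) (j k)) := by
    have hnek := hne k
    obtain ⟨i, hi⟩ := Nat.exists_eq_add_one_of_ne_zero hjk
    rw [hi] at hnek ⊢
    exact sub_padicValNat_le_padicValRat_genBinom_succ (hval k hjk) hnek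
  have hxk : padicValRat p (multibrotArg d m n j k)
      = padicValNat p m - (n - k.val : ℕ) * padicValNat p d := by
    rw [multibrotArg_of_forall_lt_eq_zero j hmin, padicValRat_natCast_div_pow hm (by omega)]
  rw [hxk] at hfirst
  calc (padicValNat p m : ℤ) - padicValNat p a ! - padicValNat p d * a
      < padicValNat p m - (n - k.val : ℕ) * padicValNat p d - padicValNat p (j k) := by
        nlinarith [hea k hjk]
    _ ≤ padicValRat p (genBinom (multibrotArg d m n j k) (j k)) := hfirst
    _ ≤ _ := single_le_sum (fun k _ => hnonneg k) (mem_univ k)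

theorem eq_zero_or_lt_padicValRat_multibrotSummand (hd : 2 ≤ d) (hm : m ≠ 0)
    (ha : a * (d - 1) = m + 1) (ha2 : 2 ≤ a) (hpm : p ∣ m) (hpd : p ∣ d) (j : Fin n → ℕ) :
    multibrotSummand d m n j = 0 ∨ (padicValNat p m : ℤ) - padicValNat p a ! - padicValNat p d * a
      < padicValRat p (multibrotSummand d m n j) := by
  rw [multibrotSummand]
  split_ifs with hj
  swap
  · exact Or.inl rfl
  by_cases hzero : ∃ k, genBinom (multibrotArg d m n j k) (j k) = 0
  · obtain ⟨k, hk⟩ := hzero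
    exact Or.inl (prod_eq_zero (mem_univ k) hk)
  have hne : ∀ k, genBinom (multibrotArg d m n j k) (j k) ≠ 0 := fun k hk => hzero ⟨k, hk⟩
  right
  rw [padicValRat.prod fun k _ => hne k]
  rcases lt_or_ge (padicValNat p m : ℤ) (padicValNat p d * a) with hvt | hvt
  · exact lt_sum_padicValRat_genBinom_of_lt hd hm ha ha2 hpm hpd hj hvt
  · exact lt_sum_padicValRat_genBinom_of_le hd hm ha ha2 hpd hj hne hvt

end Summand

theorem multibrotB_padicValRat_gt_general (d m n : ℕ) (hd : 2 ≤ d) (hm : 1 ≤ m)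
    (hdvd : (d - 1) ∣ (m + 1)) (a : ℕ) (ha : a = (m + 1) / (d - 1))
    (p : ℕ) (hp : p.Prime) (hpd : p ∣ d) (t : ℕ) (ht : t = padicValNat p d)
    (hpm : p ∣ m) (hne : m ≠ d - 2) :
    multibrotB d m n = 0 ∨
      -((padicValNat p (Nat.factorial a) : ℤ) + (t : ℤ) * (a : ℤ))
        < padicValRat p (multibrotB d m n) := by
  have : Fact p.Prime := ⟨hp⟩
  have ha' : a * (d - 1) = m + 1 := ha ▸ Nat.div_mul_cancel hdvd
  have ha2 : 2 ≤ a := by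
    by_contra! h
    interval_cases a <;> omega
  rw [multibrotB_eq_finsum]
  by_cases h0 : ∑ᶠ j, multibrotSummand d m n j = 0
  · left
    rw [h0, mul_zero]
  right
  have hlt := (padicValRat.eq_zero_or_lt_finsum
    (eq_zero_or_lt_padicValRat_multibrotSummand hd (by omega) ha' ha2 hpm hpd)).resolve_left h0
  have hm0 : (m : ℚ) ≠ 0 := by exact_mod_cast (show m ≠ 0 by omega)
  rw [padicValRat.mul (by simpa using hm0) h0, padicValRat.neg, one_div, padicValRat.inv,
    padicValRat.of_nat, ht]
  linarith

theorem multibrotB_padicValRat_gt (d m n : ℕ) (hd : 2 ≤ d) (hm : 1 ≤ m) (hn : 1 ≤ n)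
    (hdvd : (d - 1) ∣ (m + 1)) (a : ℕ) (ha : a = (m + 1) / (d - 1))
    (p : ℕ) (hp : p.Prime) (hpd : p ∣ d) (t : ℕ) (ht : t = padicValNat p d)
    (hmn : m ≤ d ^ (n + 1) - 3)
    (hpm : p ∣ m) (hne : m ≠ d - 2) :
    multibrotB d m n = 0 ∨
      -((padicValNat p (Nat.factorial a) : ℤ) + (t : ℤ) * (a : ℤ))
        < padicValRat p (multibrotB d m n) :=
  multibrotB_padicValRat_gt_general d m n hd hm hdvd a ha p hp hpd t ht hpm hne
end

section
/- Let d ≥ 2 and m ≥ 1 be integers with (d−1) dividing (m+1), and suppose there is a prime p dividing d that does not divide m. Then for every integer n ≥ 1 with m ≤ d^{n+1} − 3, the coefficient B(d,m,n) is nonzero. -/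
/-!
Fix a prime `p ∣ d` with `p ∤ m` and write `m + 1 = (d - 1) M`. Each argument
`m / d^e - (integer)` with `e ≥ 1` has `p`-adic norm `|d|_p^{-e} > 1`, so that
`|C_j(x)|_p = |x|_p^j / |j!|_p` and the term of a tuple `j` has norm `|d|_p^{-w} / |∏ j_k!|_p`
with `w = Σ e_k j_k`, `e_k = n - k + 1`. Bernoulli's inequality `(d - 1) e ≤ d^e - 1`, strict for
`e ≥ 2`, turns the constraint `Σ (d^{e_k} - 1) j_k = (d - 1) M` into `w ≤ M`, with equality only for
the tuple `(0, …, 0, M)`; as moreover `∏ j_k! ∣ M!`, that tuple contributes the unique term of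
largest `p`-adic norm, and the sum cannot vanish.
-/

open Finset
open scoped Nat

theorem sub_one_mul_add_one_le_pow {d : ℕ} (hd : 1 ≤ d) (e : ℕ) : (d - 1) * e + 1 ≤ d ^ e := by
  have := one_add_mul_sub_le_pow (a := (d : ℤ)) (by omega) e
  zify [hd, Nat.one_le_pow e d hd] at this ⊢
  linarith

theorem sub_one_mul_add_one_lt_pow {d e : ℕ} (hd : 2 ≤ d) (he : 2 ≤ e) :
    (d - 1) * e + 1 < d ^ e := by
  obtain ⟨c, rfl⟩ : ∃ c, d = c + 2 := ⟨d - 2, by omega⟩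
  obtain ⟨e, rfl⟩ : ∃ e', e = e' + 1 := ⟨e - 1, by omega⟩
  have := sub_one_mul_add_one_le_pow (d := c + 2) (by omega) e
  rw [show c + 2 - 1 = c + 1 by omega] at this ⊢
  rw [pow_succ]
  nlinarith [Nat.mul_le_mul_right (c + 2) this,
    Nat.mul_le_mul_left ((c + 1) * (c + 1)) (show 1 ≤ e by omega)]

theorem sub_one_mul_sum_lt_sum_pow_sub_one_mul {ι : Type*} {s : Finset ι} {d : ℕ} (hd : 2 ≤ d)
    {e j : ι → ℕ} {i₀ : ι} (hi₀ : i₀ ∈ s) (he : 2 ≤ e i₀) (hj : j i₀ ≠ 0) :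
    (d - 1) * ∑ i ∈ s, e i * j i < ∑ i ∈ s, (d ^ e i - 1) * j i := by
  rw [mul_sum]
  refine sum_lt_sum (fun i _ => ?_) ⟨i₀, hi₀, ?_⟩ <;> rw [← mul_assoc]
  · have := sub_one_mul_add_one_le_pow (d := d) (by omega) (e i)
    exact Nat.mul_le_mul_right _ (by omega)
  · have := sub_one_mul_add_one_lt_pow hd he
    exact Nat.mul_lt_mul_of_pos_right (by omega) (Nat.pos_of_ne_zero hj)

theorem sum_mul_pi_single {ι : Type*} [Fintype ι] [DecidableEq ι] (f : ι → ℕ) (i : ι) (M : ℕ) :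
    ∑ k, f k * (Pi.single i M : ι → ℕ) k = f i * M := by
  rw [sum_eq_single i (fun k _ hk => by simp [hk]) (by simp), Pi.single_eq_same]

theorem sum_mul_lt_of_ne_pi_single {d n M : ℕ} (hd : 2 ≤ d) {j : Fin (n + 1) → ℕ}
    (hj : ∑ k : Fin (n + 1), (d ^ (n + 1 - k) - 1) * j k = (d - 1) * M)
    (hne : j ≠ Pi.single (Fin.last n) M) :
    ∑ k : Fin (n + 1), (n + 1 - k) * j k < M := by
  by_cases h : ∃ k ≠ Fin.last n, j k ≠ 0
  · obtain ⟨k, hk, hjk⟩ := h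
    have hk2 : 2 ≤ n + 1 - k := by
      have := Fin.val_lt_last hk
      omega
    have := sub_one_mul_sum_lt_sum_pow_sub_one_mul hd (mem_univ k)
      (e := fun k : Fin (n + 1) => n + 1 - k) hk2 hjk
    rw [hj] at this
    exact Nat.lt_of_mul_lt_mul_left this
  · push Not at h
    have hj_eq : j = Pi.single (Fin.last n) (j (Fin.last n)) := by
      funext k
      by_cases hk : k = Fin.last n
      · subst hk; simp
      · simp [hk, h k hk]
    rw [hj_eq, sum_mul_pi_single, Fin.val_last, Nat.add_sub_cancel_left, pow_one] at hj
    exact absurd (hj_eq.trans (by rw [Nat.eq_of_mul_eq_mul_left (by omega) hj])) hne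

theorem finite_setOf_sum_pow_sub_one_mul_eq {d : ℕ} (hd : 2 ≤ d) (n N : ℕ) :
    {j : Fin n → ℕ | ∑ k : Fin n, (d ^ (n - k.val) - 1) * j k = N}.Finite := by
  refine (Set.finite_Iic fun _ => N).subset fun j (hj : _ = N) k => ?_
  have hpow : 1 < d ^ (n - k.val) := Nat.one_lt_pow (by omega) (by omega)
  exact hj ▸ (Nat.le_mul_of_pos_left (j k) (by omega)).trans
    (single_le_sum (f := fun k => (d ^ (n - k.val) - 1) * j k) (fun _ _ => Nat.zero_le _) (mem_univ k))

noncomputable def multibrotTerm (d m n : ℕ) (j : Fin n → ℕ) : ℚ :=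
  ∏ k : Fin n,
    genBinom ((m : ℚ) / (d : ℚ) ^ (n - k.val)
      - ∑ l ∈ univ.filter (fun l : Fin n => l < k), (d : ℚ) ^ (k.val - l.val) * ((j l : ℕ) : ℚ))
      (j k)

theorem multibrotB_eq (d m n : ℕ) :
    multibrotB d m n = -(1 / (m : ℚ)) * ∑ᶠ j : Fin n → ℕ,
      if ∑ k : Fin n, (d ^ (n - k.val) - 1) * j k = m + 1 then multibrotTerm d m n j else 0 :=
  rfl

section padicNorm

variable {p : ℕ} [Fact p.Prime]

theorem padicNorm_pos {x : ℚ} (hx : x ≠ 0) : 0 < padicNorm p x :=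
  (padicNorm.nonneg _).lt_of_ne (padicNorm.nonzero hx).symm

theorem padicNorm_sub_of_lt {x y : ℚ} (h : padicNorm p y < padicNorm p x) :
    padicNorm p (x - y) = padicNorm p x := by
  rw [sub_eq_add_neg, padicNorm.add_eq_max_of_ne (by rw [padicNorm.neg]; exact h.ne'),
    padicNorm.neg, max_eq_left h.le]

theorem padicNorm_le_of_dvd {a b : ℕ} (h : a ∣ b) :
    padicNorm p (b : ℚ) ≤ padicNorm p (a : ℚ) := by
  obtain ⟨c, rfl⟩ := h
  rw [Nat.cast_mul, padicNorm.mul]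
  exact mul_le_of_le_one_right (padicNorm.nonneg _) (padicNorm.of_nat c)

theorem sum_ne_zero_of_padicNorm_lt {ι : Type*} [DecidableEq ι] {s : Finset ι} {f : ι → ℚ}
    {i₀ : ι} (hi₀ : i₀ ∈ s) (h₀ : f i₀ ≠ 0)
    (hlt : ∀ i ∈ s, i ≠ i₀ → padicNorm p (f i) < padicNorm p (f i₀)) :
    ∑ i ∈ s, f i ≠ 0 := by
  have hrest : padicNorm p (∑ i ∈ s.erase i₀, f i) < padicNorm p (f i₀) :=
    padicNorm.sum_lt' (fun i hi => hlt i (mem_of_mem_erase hi) (ne_of_mem_erase hi))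
      (padicNorm_pos h₀)
  intro hsum
  have := congrArg (padicNorm p) hsum
  rw [← add_sum_erase s f hi₀, padicNorm.add_eq_max_of_ne hrest.ne', max_eq_left hrest.le,
    padicNorm.zero] at this
  exact padicNorm.nonzero h₀ this

theorem finsum_ne_zero_of_padicNorm_lt {ι : Type*} {f : ι → ℚ} (hf : f.HasFiniteSupport)
    {i₀ : ι} (h₀ : f i₀ ≠ 0) (hlt : ∀ i ≠ i₀, padicNorm p (f i) < padicNorm p (f i₀)) :
    ∑ᶠ i, f i ≠ 0 := by
  classical
  rw [finsum_eq_sum f hf]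
  exact sum_ne_zero_of_padicNorm_lt (hf.mem_toFinset.mpr h₀) h₀ fun i _ hi => hlt i hi

theorem padicNorm_genBinom_of_one_lt {x : ℚ} (hx : 1 < padicNorm p x) (j : ℕ) :
    padicNorm p (genBinom x j) = padicNorm p x ^ j / padicNorm p (j ! : ℚ) := by
  rw [genBinom, padicNorm.div, IsAbsoluteValue.map_prod (padicNorm p),
    prod_congr rfl fun i _ => padicNorm_sub_of_lt ((padicNorm.of_nat i).trans_lt hx),
    prod_const, card_range]

variable {d m : ℕ}

theorem one_lt_inv_padicNorm (hd : d ≠ 0) (hpd : p ∣ d) : 1 < (padicNorm p d)⁻¹ :=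
  (one_lt_inv₀ (padicNorm_pos (Nat.cast_ne_zero.mpr hd))).mpr
    ((padicNorm.nat_lt_one_iff d).mpr hpd)

theorem padicNorm_div_pow_sub_natCast (hd : d ≠ 0) (hpd : p ∣ d) (hpm : ¬p ∣ m) {e : ℕ}
    (he : e ≠ 0) (c : ℕ) :
    padicNorm p ((m : ℚ) / (d : ℚ) ^ e - c) = (padicNorm p d)⁻¹ ^ e := by
  have hdiv : padicNorm p ((m : ℚ) / (d : ℚ) ^ e) = (padicNorm p d)⁻¹ ^ e := by
    rw [padicNorm.div, IsAbsoluteValue.abv_pow (padicNorm p),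
      (padicNorm.nat_eq_one_iff m).mpr hpm, one_div, inv_pow]
  have hc : padicNorm p c < padicNorm p ((m : ℚ) / (d : ℚ) ^ e) :=
    hdiv ▸ (padicNorm.of_nat c).trans_lt (one_lt_pow₀ (one_lt_inv_padicNorm hd hpd) he)
  rw [padicNorm_sub_of_lt hc, hdiv]

theorem padicNorm_multibrotTerm {n : ℕ} (hd : d ≠ 0) (hpd : p ∣ d) (hpm : ¬p ∣ m)
    (j : Fin n → ℕ) :
    padicNorm p (multibrotTerm d m n j)
      = (padicNorm p d)⁻¹ ^ (∑ k : Fin n, (n - k.val) * j k)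
        / padicNorm p ((∏ k : Fin n, (j k)! : ℕ) : ℚ) := by
  rw [multibrotTerm, IsAbsoluteValue.map_prod (padicNorm p), Nat.cast_prod,
    IsAbsoluteValue.map_prod (padicNorm p), ← prod_pow_eq_pow_sum, ← prod_div_distrib]
  refine prod_congr rfl fun k _ => ?_
  have hx := padicNorm_div_pow_sub_natCast (p := p) hd hpd hpm (e := n - k.val) (by omega)
    (∑ l ∈ univ.filter (fun l : Fin n => l < k), d ^ (k.val - l.val) * j l)
  push_cast at hx
  rw [padicNorm_genBinom_of_one_lt (hx ▸ one_lt_pow₀ (one_lt_inv_padicNorm hd hpd) (by omega)),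
    hx, ← pow_mul]

theorem multibrotTerm_ne_zero {n : ℕ} (hd : d ≠ 0) (hpd : p ∣ d) (hpm : ¬p ∣ m)
    (j : Fin n → ℕ) : multibrotTerm d m n j ≠ 0 := by
  have hpos : 0 < padicNorm p (multibrotTerm d m n j) := by
    rw [padicNorm_multibrotTerm hd hpd hpm]
    exact div_pos (pow_pos (one_pos.trans (one_lt_inv_padicNorm hd hpd)) _)
      (padicNorm_pos (Nat.cast_ne_zero.mpr
        (prod_ne_zero_iff.mpr fun k _ => Nat.factorial_ne_zero (j k))))
  exact fun h => by rw [h, padicNorm.zero] at hpos; exact hpos.false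

theorem padicNorm_multibrotTerm_lt_pi_single {n M : ℕ} (hd : 2 ≤ d) (hpd : p ∣ d)
    (hpm : ¬p ∣ m) {j : Fin (n + 1) → ℕ}
    (hj : ∑ k : Fin (n + 1), (d ^ (n + 1 - k) - 1) * j k = (d - 1) * M)
    (hne : j ≠ Pi.single (Fin.last n) M) :
    padicNorm p (multibrotTerm d m (n + 1) j)
      < padicNorm p (multibrotTerm d m (n + 1) (Pi.single (Fin.last n) M)) := by
  have hd0 : d ≠ 0 := by omega
  have hweight := sum_mul_lt_of_ne_pi_single hd hj hne
  have hdvd : ∏ k, (j k)! ∣ M ! := (Nat.prod_factorial_dvd_factorial_sum _ _).trans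
    (Nat.factorial_dvd_factorial ((sum_le_sum fun k _ => Nat.le_mul_of_pos_left (j k)
      (by omega)).trans hweight.le))
  have hsingle : ∏ k : Fin (n + 1), ((Pi.single (Fin.last n) M : Fin (n + 1) → ℕ) k)! = M ! := by
    rw [prod_eq_single (Fin.last n) (fun k _ hk => by simp [hk]) (by simp), Pi.single_eq_same]
  rw [padicNorm_multibrotTerm hd0 hpd hpm, padicNorm_multibrotTerm hd0 hpd hpm,
    sum_mul_pi_single, hsingle, Fin.val_last, Nat.add_sub_cancel_left, one_mul]
  exact div_lt_div₀ (pow_lt_pow_right₀ (one_lt_inv_padicNorm hd0 hpd) hweight)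
    (padicNorm_le_of_dvd hdvd) (pow_nonneg (inv_nonneg.mpr (padicNorm.nonneg _)) _)
    (padicNorm_pos (Nat.cast_ne_zero.mpr (Nat.factorial_ne_zero M)))

end padicNorm

theorem multibrotB_ne_zero (d m : ℕ) (hd : 2 ≤ d) (hm : 1 ≤ m)
    (hdvd : (d - 1) ∣ (m + 1))
    (hex : ∃ p : ℕ, p.Prime ∧ p ∣ d ∧ ¬ p ∣ m) :
    ∀ n : ℕ, 1 ≤ n → m ≤ d ^ (n + 1) - 3 → multibrotB d m n ≠ 0 := by
  obtain ⟨p, hp, hpd, hpm⟩ := hex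
  have : Fact p.Prime := ⟨hp⟩
  obtain ⟨M, hM⟩ := hdvd
  rintro (_ | n) hn -
  · omega
  set jmax : Fin (n + 1) → ℕ := Pi.single (Fin.last n) M
  have hjmax : ∑ k : Fin (n + 1), (d ^ (n + 1 - k.val) - 1) * jmax k = m + 1 := by
    rw [sum_mul_pi_single, Fin.val_last, Nat.add_sub_cancel_left, pow_one, hM]
  have hterm : multibrotTerm d m (n + 1) jmax ≠ 0 := multibrotTerm_ne_zero (by omega) hpd hpm _
  rw [multibrotB_eq]
  refine mul_ne_zero (neg_ne_zero.mpr (one_div_ne_zero (Nat.cast_ne_zero.mpr (by omega))))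
    (finsum_ne_zero_of_padicNorm_lt (p := p) (i₀ := jmax) ?_ (by rwa [if_pos hjmax]) fun j hj => ?_)
  · exact (finite_setOf_sum_pow_sub_one_mul_eq hd (n + 1) (m + 1)).subset fun j hj => by
      by_contra hc
      exact hj (if_neg hc)
  · rw [if_pos hjmax]
    split_ifs with hc
    · exact padicNorm_multibrotTerm_lt_pi_single hd hpd hpm (hc.trans hM) hj
    · rw [padicNorm.zero]
      exact padicNorm_pos hterm
end
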